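/- arXiv:1905.09547 — 6 statements merged into one kernel-verified Lean document; each statement's English description precedes it below -/
import Mathlib

section
/- Fix 0 < p < 1 and set β = √(2p/(2−p)), α = p/(2−p), and h(z) = 1 + βz + αz². Then h has no zeros in the closed unit disc, and if w is the analytic function on 𝔻 with exp(w) = h and w(0) = 0, then the function f = (1 − p/2)^{2/p} · exp((2/p)·w) satisfies ‖f‖_{H^p} = 1 and a_2(f) = (2/p)·(1 − p/2)^{2/p − 1}. -/
open Metric Filter MeasureTheory

/-- The `H^p` norm of a function on the unit disc:
`(sup_{0<r<1} (2π)⁻¹ ∫₀^{2π} |f(r e^{iθ})|^p dθ)^{1/p}`. -/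
noncomputable def hpNorm (p : ℝ) (f : ℂ → ℂ) : ℝ :=
  (sSup {x : ℝ | ∃ r : ℝ, 0 < r ∧ r < 1 ∧
    x = (2 * Real.pi)⁻¹ * ∫ θ in (0:ℝ)..(2 * Real.pi),
      ‖f (r * Complex.exp (θ * Complex.I))‖ ^ p}) ^ (1 / p)

/-- The `n`-th Taylor coefficient of `f` at the origin: `a_n = f⁽ⁿ⁾(0)/n!`. -/
noncomputable def taylorCoeff (f : ℂ → ℂ) (n : ℕ) : ℂ :=
  iteratedDeriv n f 0 / n.factorial

/-!
Since `β² = 2α`, the roots of `h` are non-real conjugates of modulus `α^{-1/2} > 1`.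
On the disc `|f|^p = (1 - p/2)² |h|²`, whose circle means are, by Parseval,
`(1 - p/2)² (1 + β² r² + α² r⁴)`; these increase to `(1 - p/2)² (1 + α)² = 1`.
For the coefficient, `w' = h'/h` gives `w'(0) = β` and `w''(0) = 2α - β² = 0`, so
`(e^{k w})''(0) = k² β²` with `k = 2/p`.
-/

open Topology

theorem mul_normSq_eq_one_of_quadratic_eq_zero {a b : ℝ} (hab : b ^ 2 < 4 * a) {z : ℂ}
    (hz : 1 + b * z + a * z ^ 2 = 0) : a * Complex.normSq z = 1 := by
  have hre := congrArg Complex.re hz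
  have him := congrArg Complex.im hz
  simp only [pow_two, Complex.add_re, Complex.add_im, Complex.mul_re, Complex.mul_im,
    Complex.ofReal_re, Complex.ofReal_im, Complex.one_re, Complex.one_im, Complex.zero_re,
    Complex.zero_im] at hre him
  rw [Complex.normSq_apply]
  -- `z` cannot be real as `b² < 4a`, so `z̄` is the other root and `z + z̄ = -b/a`
  have hsum : b + 2 * a * z.re = 0 := by
    by_contra hne
    have hreal : z.im = 0 :=
      (mul_eq_zero.mp (show z.im * (b + 2 * a * z.re) = 0 by linarith)).resolve_right hne
    rw [hreal] at hre
    nlinarith [sq_nonneg (2 * a * z.re + b)]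
  linear_combination hsum * z.re - hre

theorem quadratic_ne_zero_of_norm_le_one {a b : ℝ} (hab : b ^ 2 < 4 * a) (ha : a < 1) {z : ℂ}
    (hz : ‖z‖ ≤ 1) : 1 + b * z + a * z ^ 2 ≠ 0 := by
  intro h0
  have h1 := mul_normSq_eq_one_of_quadratic_eq_zero hab h0
  rw [Complex.normSq_eq_norm_sq] at h1
  have ha0 : 0 < a := by nlinarith [sq_nonneg b]
  have hz2 : ‖z‖ ^ 2 ≤ 1 := by nlinarith [norm_nonneg z]
  nlinarith

theorem normSq_quadratic_circle (c₀ c₁ c₂ r θ : ℝ) :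
    Complex.normSq (c₀ + c₁ * (r * Complex.exp (θ * Complex.I))
        + c₂ * (r * Complex.exp (θ * Complex.I)) ^ 2) =
      (c₀ ^ 2 + c₁ ^ 2 * r ^ 2 + c₂ ^ 2 * r ^ 4)
        + 2 * c₁ * r * (c₀ + c₂ * r ^ 2) * Real.cos θ
        + 2 * c₀ * c₂ * r ^ 2 * Real.cos (2 * θ) := by
  have hz : (r : ℂ) * Complex.exp (θ * Complex.I) = ⟨r * Real.cos θ, r * Real.sin θ⟩ := by
    apply Complex.ext <;> simp [Complex.exp_ofReal_mul_I_re, Complex.exp_ofReal_mul_I_im]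
  rw [hz, Complex.normSq_apply]
  simp only [pow_two, Complex.add_re, Complex.add_im, Complex.mul_re, Complex.mul_im,
    Complex.ofReal_re, Complex.ofReal_im]
  rw [Real.cos_two_mul]
  linear_combination (c₁ ^ 2 * r ^ 2 + c₂ ^ 2 * r ^ 4 * (Real.cos θ ^ 2 + Real.sin θ ^ 2 + 1)
      - 2 * c₀ * c₂ * r ^ 2 + 2 * c₁ * c₂ * r ^ 3 * Real.cos θ) * Real.sin_sq_add_cos_sq θ

theorem integral_cos_two_mul_eq_zero :
    ∫ θ in (0:ℝ)..2 * Real.pi, Real.cos (2 * θ) = 0 := by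
  rw [intervalIntegral.integral_comp_mul_left Real.cos two_ne_zero, integral_cos,
    show 2 * (2 * Real.pi) = (4 : ℕ) * Real.pi by push_cast; ring, Real.sin_nat_mul_pi]
  simp

noncomputable def circleMean (g : ℂ → ℝ) (r : ℝ) : ℝ :=
  (2 * Real.pi)⁻¹ * ∫ θ in (0:ℝ)..(2 * Real.pi), g (r * Complex.exp (θ * Complex.I))

theorem circleMean_normSq_quadratic (c₀ c₁ c₂ r : ℝ) :
    circleMean (fun z => Complex.normSq (c₀ + c₁ * z + c₂ * z ^ 2)) r
      = c₀ ^ 2 + c₁ ^ 2 * r ^ 2 + c₂ ^ 2 * r ^ 4 := by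
  simp only [circleMean, normSq_quadratic_circle]
  have hcos : IntervalIntegrable (fun θ => 2 * c₁ * r * (c₀ + c₂ * r ^ 2) * Real.cos θ)
      volume 0 (2 * Real.pi) := by
    apply Continuous.intervalIntegrable
    fun_prop
  have hcos2 : IntervalIntegrable (fun θ => 2 * c₀ * c₂ * r ^ 2 * Real.cos (2 * θ))
      volume 0 (2 * Real.pi) := by
    apply Continuous.intervalIntegrable
    fun_prop
  rw [intervalIntegral.integral_add (intervalIntegrable_const.add hcos) hcos2,
    intervalIntegral.integral_add intervalIntegrable_const hcos, intervalIntegral.integral_const,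
    intervalIntegral.integral_const_mul, intervalIntegral.integral_const_mul, integral_cos,
    integral_cos_two_mul_eq_zero]
  simp only [sub_zero, smul_eq_mul, Real.sin_two_pi, Real.sin_zero, sub_self, mul_zero, add_zero]
  field_simp

theorem hpNorm_eq_of_circleMean_eq {p : ℝ} {f : ℂ → ℂ} {g : ℝ → ℝ}
    (hmean : ∀ r ∈ Set.Ioo (0 : ℝ) 1, circleMean (fun z => ‖f z‖ ^ p) r = g r)
    (hmono : MonotoneOn g (Set.Ioo 0 1)) (hcont : ContinuousWithinAt g (Set.Ioo 0 1) 1) :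
    hpNorm p f = g 1 ^ (1 / p) := by
  have hset : {x : ℝ | ∃ r : ℝ, 0 < r ∧ r < 1 ∧
      x = (2 * Real.pi)⁻¹ * ∫ θ in (0:ℝ)..(2 * Real.pi),
        ‖f (r * Complex.exp (θ * Complex.I))‖ ^ p} = g '' Set.Ioo 0 1 := by
    ext x
    constructor
    · rintro ⟨r, hr0, hr1, rfl⟩
      exact ⟨r, ⟨hr0, hr1⟩, (hmean r ⟨hr0, hr1⟩).symm⟩
    · rintro ⟨r, hr, rfl⟩
      exact ⟨r, hr.1, hr.2, (hmean r hr).symm⟩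
  have hlub : IsLUB (g '' Set.Ioo 0 1) (g 1) :=
    (isLUB_Ioo zero_lt_one).isLUB_of_tendsto hmono (Set.nonempty_Ioo.mpr zero_lt_one) hcont
  rw [hpNorm, hset, hlub.csSup_eq ((Set.nonempty_Ioo.mpr zero_lt_one).image g)]

theorem norm_rpow_mul_cexp_rpow {p c : ℝ} (hp : p ≠ 0) (hc : 0 ≤ c) (w : ℂ) :
    ‖((c ^ (2 / p) : ℝ) : ℂ) * Complex.exp (((2 / p : ℝ) : ℂ) * w)‖ ^ p
      = c ^ 2 * ‖Complex.exp w‖ ^ 2 := by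
  rw [norm_mul, Complex.norm_real, Real.norm_of_nonneg (by positivity), Complex.norm_exp,
    Complex.norm_exp, Complex.re_ofReal_mul, Real.mul_rpow (by positivity) (by positivity),
    ← Real.rpow_mul hc, ← Real.exp_mul, div_mul_cancel₀ 2 hp, Real.rpow_two,
    ← Real.exp_nat_mul]
  congr 2
  push_cast
  field_simp

theorem hpNorm_eq_of_cexp_eq_quadratic {p c a b : ℝ} (hp : p ≠ 0) (hc : 0 ≤ c)
    {w f : ℂ → ℂ}
    (hexp : ∀ z ∈ ball (0 : ℂ) 1, Complex.exp (w z) = 1 + b * z + a * z ^ 2)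
    (hf : ∀ z ∈ ball (0 : ℂ) 1,
      f z = ((c ^ (2 / p) : ℝ) : ℂ) * Complex.exp (((2 / p : ℝ) : ℂ) * w z)) :
    hpNorm p f = (c ^ 2 * (1 + b ^ 2 + a ^ 2)) ^ (1 / p) := by
  have hmean : ∀ r ∈ Set.Ioo (0 : ℝ) 1, circleMean (fun z => ‖f z‖ ^ p) r
      = c ^ 2 * (1 + b ^ 2 * r ^ 2 + a ^ 2 * r ^ 4) := by
    intro r ⟨hr0, hr1⟩
    have hpt : ∀ θ : ℝ, ‖f (r * Complex.exp (θ * Complex.I))‖ ^ p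
        = c ^ 2 * Complex.normSq (((1 : ℝ) : ℂ) + b * (r * Complex.exp (θ * Complex.I))
          + a * (r * Complex.exp (θ * Complex.I)) ^ 2) := by
      intro θ
      have hz : (r : ℂ) * Complex.exp (θ * Complex.I) ∈ ball (0 : ℂ) 1 := by
        simpa [norm_mul, Complex.norm_exp_ofReal_mul_I, abs_of_pos hr0] using hr1
      rw [hf _ hz, norm_rpow_mul_cexp_rpow hp hc, hexp _ hz, Complex.normSq_eq_norm_sq,
        Complex.ofReal_one]
    have hquad := circleMean_normSq_quadratic 1 b a r
    simp only [circleMean, hpt, intervalIntegral.integral_const_mul] at hquad ⊢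
    rw [mul_left_comm, hquad]
    ring
  rw [hpNorm_eq_of_circleMean_eq hmean]
  · norm_num
  · intro r hr s _ hrs
    have hr0 : 0 ≤ r := hr.1.le
    dsimp only
    gcongr
  · exact Continuous.continuousWithinAt (by fun_prop)
theorem mul_deriv_eq_deriv_of_cexp_eventuallyEq {w h : ℂ → ℂ} {z : ℂ}
    (hw : DifferentiableAt ℂ w z) (hexp : (fun y => Complex.exp (w y)) =ᶠ[𝓝 z] h) :
    h z * deriv w z = deriv h z := by
  rw [← hexp.deriv_eq, hw.hasDerivAt.cexp.deriv, hexp.eq_of_nhds]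

theorem deriv_mul_deriv_add_mul_iteratedDeriv_two_of_cexp_eventuallyEq {w h : ℂ → ℂ} {z : ℂ}
    (hw : AnalyticAt ℂ w z) (hexp : (fun y => Complex.exp (w y)) =ᶠ[𝓝 z] h) :
    deriv h z * deriv w z + h z * iteratedDeriv 2 w z = iteratedDeriv 2 h z := by
  have hderiv : (fun y => h y * deriv w y) =ᶠ[𝓝 z] deriv h := by
    filter_upwards [hexp.eventually_nhds, hw.eventually_analyticAt] with y hexp_y hw_y
    exact mul_deriv_eq_deriv_of_cexp_eventuallyEq hw_y.differentiableAt hexp_y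
  have hh : DifferentiableAt ℂ h z :=
    hw.differentiableAt.cexp.congr_of_eventuallyEq hexp.symm
  rw [iteratedDeriv_succ, iteratedDeriv_one, iteratedDeriv_succ, iteratedDeriv_one,
    ← hderiv.deriv_eq, (hh.hasDerivAt.fun_mul hw.deriv.differentiableAt.hasDerivAt).deriv]

theorem iteratedDeriv_two_const_mul_cexp_mul {w : ℂ → ℂ} {z : ℂ} (hw : AnalyticAt ℂ w z)
    (c k : ℂ) :
    iteratedDeriv 2 (fun y => c * Complex.exp (k * w y)) z
      = c * (k * iteratedDeriv 2 w z + (k * deriv w z) ^ 2) * Complex.exp (k * w z) := by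
  have hderiv : deriv (fun y => c * Complex.exp (k * w y))
      =ᶠ[𝓝 z] fun y => c * k * (Complex.exp (k * w y) * deriv w y) := by
    filter_upwards [hw.eventually_analyticAt] with y hw_y
    rw [((hw_y.differentiableAt.hasDerivAt.const_mul k).cexp.const_mul c).deriv]
    ring
  have hd := (((hw.differentiableAt.hasDerivAt.const_mul k).cexp).fun_mul
    hw.deriv.differentiableAt.hasDerivAt).const_mul (c * k)
  rw [iteratedDeriv_succ, iteratedDeriv_one, hderiv.deriv_eq, hd.deriv, iteratedDeriv_succ,
    iteratedDeriv_one]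
  ring

theorem hasDerivAt_quadratic (a b c z : ℂ) :
    HasDerivAt (fun z : ℂ => a + b * z + c * z ^ 2) (b + 2 * c * z) z := by
  simpa [mul_comm 2 c, mul_assoc] using
    (((hasDerivAt_id z).const_mul b).const_add a).fun_add ((hasDerivAt_pow 2 z).const_mul c)

theorem deriv_quadratic (a b c : ℂ) :
    deriv (fun z : ℂ => a + b * z + c * z ^ 2) = fun z => b + 2 * c * z :=
  funext fun z => (hasDerivAt_quadratic a b c z).deriv

theorem iteratedDeriv_two_quadratic (a b c : ℂ) :
    iteratedDeriv 2 (fun z : ℂ => a + b * z + c * z ^ 2) = fun _ => 2 * c := by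
  rw [iteratedDeriv_succ, iteratedDeriv_one, deriv_quadratic]
  ext z
  simp

theorem iteratedDeriv_two_const_mul_cexp_mul_of_cexp_eq_quadratic {w : ℂ → ℂ} {a b : ℂ}
    (hw : AnalyticAt ℂ w 0) (hw0 : w 0 = 0)
    (hexp : (fun z => Complex.exp (w z)) =ᶠ[𝓝 0] fun z => 1 + b * z + a * z ^ 2) (c k : ℂ) :
    iteratedDeriv 2 (fun z => c * Complex.exp (k * w z)) 0
      = c * (k * (2 * a - b ^ 2) + (k * b) ^ 2) := by
  have h1 := mul_deriv_eq_deriv_of_cexp_eventuallyEq hw.differentiableAt hexp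
  have h2 := deriv_mul_deriv_add_mul_iteratedDeriv_two_of_cexp_eventuallyEq hw hexp
  simp only [deriv_quadratic, iteratedDeriv_two_quadratic] at h1 h2
  have hw1 : deriv w 0 = b := by linear_combination h1
  have hw2 : iteratedDeriv 2 w 0 = 2 * a - b ^ 2 := by linear_combination h2 - b * hw1
  rw [iteratedDeriv_two_const_mul_cexp_mul hw, hw0, hw1, hw2, mul_zero, Complex.exp_zero, mul_one]

theorem C2p_extremal_function (p : ℝ) (hp0 : 0 < p) (hp1 : p < 1)
    (β α : ℝ) (hβ : β = Real.sqrt (2 * p / (2 - p))) (hα : α = p / (2 - p))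
    (h : ℂ → ℂ) (hh : ∀ z : ℂ, h z = 1 + (β : ℂ) * z + (α : ℂ) * z ^ 2) :
    (∀ z : ℂ, ‖z‖ ≤ 1 → h z ≠ 0) ∧
    ∀ w : ℂ → ℂ, AnalyticOn ℂ w (ball (0:ℂ) 1) → w 0 = 0 →
      (∀ z ∈ ball (0:ℂ) 1, Complex.exp (w z) = h z) →
      ∀ f : ℂ → ℂ,
        (∀ z ∈ ball (0:ℂ) 1,
          f z = (((1 - p / 2) ^ (2 / p) : ℝ) : ℂ) * Complex.exp (((2 / p : ℝ) : ℂ) * w z)) →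
        hpNorm p f = 1 ∧
          taylorCoeff f 2 = (((2 / p) * (1 - p / 2) ^ (2 / p - 1) : ℝ) : ℂ) := by
  have hp2 : 0 < 2 - p := by linarith
  have hα0 : 0 < α := by rw [hα]; positivity
  have hα1 : α < 1 := by rw [hα, div_lt_one hp2]; linarith
  have hβα : β ^ 2 = 2 * α := by rw [hβ, Real.sq_sqrt (by positivity), hα]; ring
  obtain rfl : h = fun z => 1 + (β : ℂ) * z + (α : ℂ) * z ^ 2 := funext hh
  refine ⟨fun z hz => quadratic_ne_zero_of_norm_le_one (by linarith) hα1 hz, ?_⟩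
  intro w hw hw0 hexp f hf
  have hball : ball (0 : ℂ) 1 ∈ 𝓝 0 := ball_mem_nhds 0 one_pos
  constructor
  · have hmean_one : (1 - p / 2) ^ 2 * (1 + β ^ 2 + α ^ 2) = 1 := by
      rw [hβα, hα]; field_simp; ring
    rw [hpNorm_eq_of_cexp_eq_quadratic hp0.ne' (by linarith) hexp hf, hmean_one, Real.one_rpow]
  · have hf0 : f =ᶠ[𝓝 0] fun z => (((1 - p / 2) ^ (2 / p) : ℝ) : ℂ)
        * Complex.exp (((2 / p : ℝ) : ℂ) * w z) := eventually_of_mem hball hf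
    rw [taylorCoeff, hf0.iteratedDeriv_eq,
      iteratedDeriv_two_const_mul_cexp_mul_of_cexp_eq_quadratic (hw.analyticAt hball) hw0
        (eventually_of_mem hball hexp)]
    have hcoeff :
        (1 - p / 2) ^ (2 / p) * (2 / p * β) ^ 2 / 2 = 2 / p * (1 - p / 2) ^ (2 / p - 1) := by
      rw [Real.rpow_sub_one (by linarith), mul_pow, hβα, hα]
      field_simp
    have hβαC : (β : ℂ) ^ 2 = 2 * α := by exact_mod_cast hβα
    rw [← hcoeff]
    push_cast
    linear_combination (-(((1 - p / 2) ^ (2 / p) : ℝ) : ℂ) * (2 / p) / 2) * hβαC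
end

section
/- Set β = (1/2)·√(3 + (1/3)√33), γ = (1 + √33)/8, α = √(15 − √33)/8, and define f(z) = ((483 − 19√33)/1153)^{3/2} · (1 + βz + γz² + αz³)³. Then ‖f‖_{H^{2/3}} = 1 and a_3(f) = √(2(1103 + 33√33)/1153). -/
/-!
With `c = (483 - 19√33)/1153` and `P = 1 + βz + γz² + αz³` we have `f = c^{3/2} P³`, so
`|f|^{2/3} = c |P|²`. By Parseval the mean of `c |P|²` over `|z| = r` is `c Σ |p_k|² r^{2k}`,
which increases with `r` to `c (1 + β² + γ² + α²) = 1`. The third Taylor coefficient is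
`c^{3/2} (3α + 6βγ + β³)`, and both identities are arithmetic in `ℚ(√33)`.
-/

open Metric Filter MeasureTheory

open Real Complex Polynomial Set Topology
open scoped ComplexConjugate

lemma integral_circleMap_zero_int_mul (R : ℝ) (m : ℤ) :
    ∫ θ in (0:ℝ)..2 * π, circleMap 0 R (m * θ) = (if m = 0 then 2 * π * R else 0 : ℂ) := by
  split_ifs with hm
  · simp [hm, circleMap_zero, mul_comm]
  · have hc : (m * I : ℂ) ≠ 0 := by simp [hm, I_ne_zero]
    simp_rw [circleMap_zero, intervalIntegral.integral_const_mul]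
    push_cast
    simp_rw [show ∀ θ : ℝ, (m : ℂ) * θ * I = m * I * θ from fun θ => by ring,
      integral_exp_mul_complex hc]
    push_cast
    rw [show (m : ℂ) * I * (2 * π) = m * (2 * π * I) by ring, exp_int_mul_two_pi_mul_I]
    simp

lemma circleAverage_norm_sq_sum_mul_pow (a : ℕ → ℂ) (n : ℕ) (r : ℝ) :
    circleAverage (fun z ↦ ‖∑ k ∈ Finset.range n, a k * z ^ k‖ ^ 2) 0 r
      = ∑ k ∈ Finset.range n, ‖a k‖ ^ 2 * r ^ (2 * k) := by
  apply ofReal_injective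
  have hexpand : ∀ θ : ℝ, ((‖∑ k ∈ Finset.range n, a k * circleMap 0 r θ ^ k‖ ^ 2 : ℝ) : ℂ)
      = ∑ j ∈ Finset.range n, ∑ k ∈ Finset.range n,
          a j * conj (a k) * circleMap 0 (r ^ (j + k)) (((j : ℤ) - k : ℤ) * θ) := by
    intro θ
    rw [ofReal_pow, ← mul_conj', map_sum, Finset.sum_mul_sum]
    refine Finset.sum_congr rfl fun j _ ↦ Finset.sum_congr rfl fun k _ ↦ ?_
    rw [map_mul, map_pow, conj_circleMap_zero, circleMap_zero_pow, circleMap_zero_pow,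
      mul_mul_mul_comm, circleMap_zero_mul, pow_add]
    push_cast
    ring_nf
  have hint : ∀ j k : ℕ, IntervalIntegrable
      (fun θ : ℝ ↦ a j * conj (a k) * circleMap 0 (r ^ (j + k)) (((j : ℤ) - k : ℤ) * θ))
      volume 0 (2 * π) := fun j k ↦ by
    apply Continuous.intervalIntegrable
    fun_prop
  rw [circleAverage_def, smul_eq_mul, ofReal_mul, ← intervalIntegral.integral_ofReal]
  simp_rw [hexpand]
  rw [intervalIntegral.integral_finsetSum fun j _ ↦ (continuous_finsetSum _ fun k _ ↦
    by fun_prop).intervalIntegrable _ _]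
  -- orthogonality of the characters `θ ↦ exp (i m θ)`: only the terms with `j = k` survive
  simp_rw [intervalIntegral.integral_finsetSum fun k _ ↦ hint _ k,
    intervalIntegral.integral_const_mul, integral_circleMap_zero_int_mul, sub_eq_zero,
    Nat.cast_inj, mul_ite, mul_zero, Finset.sum_ite_eq, Finset.mul_sum]
  push_cast
  refine Finset.sum_congr rfl fun k hk ↦ ?_
  rw [if_pos hk, mul_conj']
  field_simp
  ring_nf

lemma hpNorm_eq_of_circleAverage_eq {p L : ℝ} {f : ℂ → ℂ} (M : ℝ → ℝ)
    (hM : ∀ r ∈ Ioo (0:ℝ) 1, circleAverage (fun z ↦ ‖f z‖ ^ p) 0 r = M r)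
    (hmono : MonotoneOn M (Ioo 0 1)) (hlim : Tendsto M (𝓝[Ioo 0 1] 1) (𝓝 L)) :
    hpNorm p f = L ^ (1 / p) := by
  have hmean : ∀ r : ℝ, (2 * π)⁻¹ * ∫ θ in (0:ℝ)..(2 * π), ‖f (r * exp (θ * I))‖ ^ p
      = circleAverage (fun z ↦ ‖f z‖ ^ p) 0 r := fun r ↦ by
    simp only [circleAverage_def, circleMap_zero, smul_eq_mul]
  have hset : {x : ℝ | ∃ r : ℝ, 0 < r ∧ r < 1 ∧ x = (2 * π)⁻¹ * ∫ θ in (0:ℝ)..(2 * π),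
      ‖f (r * exp (θ * I))‖ ^ p} = M '' Ioo 0 1 := by
    ext x
    simp only [hmean]
    constructor
    · rintro ⟨r, h0, h1, rfl⟩
      exact ⟨r, ⟨h0, h1⟩, (hM r ⟨h0, h1⟩).symm⟩
    · rintro ⟨r, hr, rfl⟩
      exact ⟨r, hr.1, hr.2, (hM r hr).symm⟩
  have hne : (Ioo (0:ℝ) 1).Nonempty := nonempty_Ioo.2 one_pos
  rw [hpNorm, hset, ((isLUB_Ioo one_pos).isLUB_of_tendsto hmono hne hlim).csSup_eq (hne.image M)]

lemma norm_rpow_three_halves_mul_cube_rpow {c : ℝ} (hc : 0 ≤ c) (w : ℂ) :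
    ‖((c ^ ((3:ℝ)/2) : ℝ) : ℂ) * w ^ 3‖ ^ ((2:ℝ)/3) = c * ‖w‖ ^ 2 := by
  rw [norm_mul, norm_pow, norm_real, Real.norm_of_nonneg (by positivity),
    Real.mul_rpow (by positivity) (by positivity), ← Real.rpow_mul hc,
    ← Real.rpow_natCast, ← Real.rpow_mul (norm_nonneg w)]
  norm_num

lemma hpNorm_two_thirds_mul_cube_eval {c : ℝ} (hc : 0 ≤ c) (p : ℂ[X]) {n : ℕ}
    (hn : p.natDegree < n) :
    hpNorm (2/3) (fun z ↦ ((c ^ ((3:ℝ)/2) : ℝ) : ℂ) * p.eval z ^ 3)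
      = (c * ∑ k ∈ Finset.range n, ‖p.coeff k‖ ^ 2) ^ ((3:ℝ)/2) := by
  set M : ℝ → ℝ := fun r ↦ c * ∑ k ∈ Finset.range n, ‖p.coeff k‖ ^ 2 * r ^ (2 * k) with hM_def
  have hM : ∀ r ∈ Ioo (0:ℝ) 1,
      circleAverage (fun z ↦ ‖((c ^ ((3:ℝ)/2) : ℝ) : ℂ) * p.eval z ^ 3‖ ^ ((2:ℝ)/3)) 0 r
        = M r := fun r _ ↦ by
    simp_rw [hM_def, norm_rpow_three_halves_mul_cube_rpow hc, eval_eq_sum_range' hn]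
    rw [← circleAverage_norm_sq_sum_mul_pow, ← smul_eq_mul, ← circleAverage_fun_smul]
    rfl
  have hmono : MonotoneOn M (Ioo 0 1) := fun r hr s _ hrs ↦
    mul_le_mul_of_nonneg_left (Finset.sum_le_sum fun k _ ↦
      mul_le_mul_of_nonneg_left (pow_le_pow_left₀ hr.1.le hrs _) (sq_nonneg _)) hc
  have hcont : Continuous M := by fun_prop
  rw [hpNorm_eq_of_circleAverage_eq M hM hmono ((hcont.tendsto 1).mono_left nhdsWithin_le_nhds)]
  norm_num [hM_def]

lemma iteratedDeriv_polynomial_eval {𝕜 : Type*} [NontriviallyNormedField 𝕜] (p : 𝕜[X]) (n : ℕ) :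
    iteratedDeriv n (fun z ↦ p.eval z) = fun z ↦ (derivative^[n] p).eval z := by
  induction n generalizing p with
  | zero => rfl
  | succ n ih =>
    have hd : deriv (fun z ↦ p.eval z) = fun z ↦ p.derivative.eval z := funext fun _ ↦ p.deriv
    rw [iteratedDeriv_succ', hd, ih, Function.iterate_succ_apply]

lemma taylorCoeff_polynomial_eval (p : ℂ[X]) (n : ℕ) :
    taylorCoeff (fun z ↦ p.eval z) n = p.coeff n := by
  rw [taylorCoeff, iteratedDeriv_polynomial_eval]
  dsimp only
  rw [← coeff_zero_eq_eval_zero, coeff_iterate_derivative,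
    zero_add, Nat.descFactorial_self, nsmul_eq_mul,
    mul_div_cancel_left₀ _ (Nat.cast_ne_zero.2 n.factorial_ne_zero)]

lemma coeff_three_cube_cubic {R : Type*} [CommRing R] (b g a : R) :
    ((1 + C b * X + C g * X ^ 2 + C a * X ^ 3) ^ 3).coeff 3 = 3 * a + 6 * b * g + b ^ 3 := by
  simp [pow_succ, coeff_mul, Finset.Nat.antidiagonal_succ, coeff_X, coeff_one]
  ring

lemma sqrt_33_lt_six : √33 < 6 := by
  rw [Real.sqrt_lt' (by norm_num)]
  norm_num

lemma sq_sqrt_33 : √33 ^ 2 = 33 := Real.sq_sqrt (by norm_num)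

lemma extremal_const_mul : (483 - 19 * √33) / 1153 * (483 + 19 * √33) = 192 := by
  linear_combination (-361/1153) * sq_sqrt_33

lemma extremal_sum_sq {β γ α : ℝ} (hβ : β = √(3 + (1/3) * √33) / 2) (hγ : γ = (1 + √33) / 8)
    (hα : α = √(15 - √33) / 8) :
    (483 - 19 * √33) / 1153 * (1 + β ^ 2 + γ ^ 2 + α ^ 2) = 1 := by
  have hsum : 1 + β ^ 2 + γ ^ 2 + α ^ 2 = (483 + 19 * √33) / 192 := by
    rw [hβ, hγ, hα, div_pow, div_pow, div_pow, Real.sq_sqrt (by positivity),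
      Real.sq_sqrt (by linarith [sqrt_33_lt_six])]
    linear_combination (1/64) * sq_sqrt_33
  rw [hsum, ← mul_div_assoc, extremal_const_mul]
  norm_num

lemma extremal_third_coeff {β γ α : ℝ} (hβ : β = √(3 + (1/3) * √33) / 2)
    (hγ : γ = (1 + √33) / 8) (hα : α = √(15 - √33) / 8) :
    ((483 - 19 * √33) / 1153) ^ ((3:ℝ)/2) * (3 * α + 6 * β * γ + β ^ 3)
      = √(2 * (1103 + 33 * √33) / 1153) := by
  have hc : 0 < (483 - 19 * √33) / 1153 := div_pos (by linarith [sqrt_33_lt_six]) (by norm_num)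
  have hb2 : β ^ 2 = (9 + √33) / 12 := by
    rw [hβ, div_pow, Real.sq_sqrt (by positivity)]
    ring
  have ha2 : α ^ 2 = (15 - √33) / 64 := by
    rw [hα, div_pow, Real.sq_sqrt (by linarith [sqrt_33_lt_six])]
    norm_num
  have hab : α * β = (1 + √33) / 16 := by
    rw [hα, hβ, div_mul_div_comm, ← Real.sqrt_mul (by linarith [sqrt_33_lt_six]),
      show (15 - √33) * (3 + 1/3 * √33) = (1 + √33) ^ 2 by
        linear_combination (-4/3) * sq_sqrt_33,
      Real.sqrt_sq (by positivity)]
    ring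
  -- `(483 + 19 * √33) / 192` is the reciprocal of the constant `(483 - 19 * √33) / 1153`
  have hT : (3 * α + 6 * β * γ + β ^ 3) ^ 2 = (15 + √33) / 3 * ((483 + 19 * √33) / 192) ^ 2 := by
    have h6 : 6 * γ + β ^ 2 = (9 + 5 * √33) / 6 := by
      rw [hγ, hb2]
      ring
    calc (3 * α + 6 * β * γ + β ^ 3) ^ 2
        = 9 * α ^ 2 + 6 * (α * β) * (6 * γ + β ^ 2) + β ^ 2 * (6 * γ + β ^ 2) ^ 2 := by ring
      _ = 9 * ((15 - √33) / 64) + 6 * ((1 + √33) / 16) * ((9 + 5 * √33) / 6)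
          + (9 + √33) / 12 * ((9 + 5 * √33) / 6) ^ 2 := by rw [ha2, hab, h6, hb2]
      _ = (15 + √33) / 3 * ((483 + 19 * √33) / 192) ^ 2 := by
        linear_combination ((10159 + 671 * √33) / 12288) * sq_sqrt_33
  have hK : (((483 - 19 * √33) / 1153) ^ ((3:ℝ)/2)) ^ 2 = ((483 - 19 * √33) / 1153) ^ 3 := by
    rw [← Real.rpow_natCast, ← Real.rpow_mul hc.le]
    norm_num
  have hsq : (((483 - 19 * √33) / 1153) ^ ((3:ℝ)/2) * (3 * α + 6 * β * γ + β ^ 3)) ^ 2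
      = 2 * (1103 + 33 * √33) / 1153 := by
    rw [mul_pow, hK, hT]
    linear_combination ((483 - 19 * √33) / 1153 * (15 + √33) / (3 * 192 ^ 2)
      * ((483 - 19 * √33) / 1153 * (483 + 19 * √33) + 192)) * extremal_const_mul
      - (19/3459) * sq_sqrt_33
  have hnonneg : 0 ≤ ((483 - 19 * √33) / 1153) ^ ((3:ℝ)/2) * (3 * α + 6 * β * γ + β ^ 3) := by
    rw [hβ, hγ, hα]
    positivity
  rw [← hsq, Real.sqrt_sq hnonneg]

theorem C3_two_thirds_extremal_function (β γ α : ℝ)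
    (hβ : β = Real.sqrt (3 + (1/3) * Real.sqrt 33) / 2)
    (hγ : γ = (1 + Real.sqrt 33) / 8)
    (hα : α = Real.sqrt (15 - Real.sqrt 33) / 8)
    (f : ℂ → ℂ)
    (hf : ∀ z : ℂ, f z = ((((483 - 19 * Real.sqrt 33) / 1153) ^ ((3:ℝ)/2) : ℝ) : ℂ) *
      (1 + (β : ℂ) * z + (γ : ℂ) * z ^ 2 + (α : ℂ) * z ^ 3) ^ 3) :
    hpNorm (2/3) f = 1 ∧
      taylorCoeff f 3 = ((Real.sqrt (2 * (1103 + 33 * Real.sqrt 33) / 1153) : ℝ) : ℂ) := by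
  set P : ℂ[X] := 1 + C (β : ℂ) * X + C (γ : ℂ) * X ^ 2 + C (α : ℂ) * X ^ 3
  have hfP : f = fun z ↦
      ((((483 - 19 * √33) / 1153) ^ ((3:ℝ)/2) : ℝ) : ℂ) * P.eval z ^ 3 := by
    funext z
    simp [hf, P]
  constructor
  · have hdeg : P.natDegree < 4 := by
      simp only [P]
      compute_degree!
    have hcoeff : ∑ k ∈ Finset.range 4, ‖P.coeff k‖ ^ 2 = 1 + β ^ 2 + γ ^ 2 + α ^ 2 := by
      simp [Finset.sum_range_succ, P, coeff_X, coeff_one]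
    rw [hfP, hpNorm_two_thirds_mul_cube_eval (by linarith [sqrt_33_lt_six]) P hdeg, hcoeff,
      extremal_sum_sq hβ hγ hα, Real.one_rpow]
  · have hfC : f = fun z ↦
        (C ((((483 - 19 * √33) / 1153) ^ ((3:ℝ)/2) : ℝ) : ℂ) * P ^ 3).eval z := by
      simp [hfP]
    rw [hfC, taylorCoeff_polynomial_eval, coeff_C_mul, coeff_three_cube_cubic,
      ← extremal_third_coeff hβ hγ hα]
    push_cast
    ring
end

section
/- For every real q ≥ 1, one has Φ(q) ≥ 1, where Φ(q) = √((1 + √(2/q))/(1 + √(2q))) · q · (1 + 1/q)^{1−q}. -/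
/-!
With `q = t²`, `2 log Φ(t²) = 3 log t + log (t + √2) - log (√2 t + 1) + 2 (1 - t²) log (1 + 1/t²)`,
which vanishes at `t = 1`. Its derivative is nonnegative for `t ≥ 1`: bounding `log (1 + x)` by
the Padé approximant `x (6 + x) / (6 + 4x)` at `x = 1/t²` turns it into a rational function whose
numerator is nonnegative on `[1, ∞)` once `√2 ≥ 7/5`.
-/

open Real Set

lemma monotoneOn_Ici_of_hasDerivAt_nonneg {f f' : ℝ → ℝ} {a : ℝ}
    (hf : ∀ x, a ≤ x → HasDerivAt f (f' x) x) (hf' : ∀ x, a < x → 0 ≤ f' x) :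
    MonotoneOn f (Ici a) := by
  refine monotoneOn_of_hasDerivWithinAt_nonneg (f' := f') (convex_Ici a)
    (fun x hx => (hf x hx).continuousAt.continuousWithinAt) (fun x hx => ?_) (fun x hx => ?_) <;>
  rw [interior_Ici] at hx
  · exact (hf x (le_of_lt hx)).hasDerivWithinAt
  · exact hf' x hx

lemma log_one_add_le_pade {x : ℝ} (hx : 0 ≤ x) : log (1 + x) ≤ x * (6 + x) / (6 + 4 * x) := by
  let f : ℝ → ℝ := fun y => y * (6 + y) / (6 + 4 * y) - log (1 + y)
  have hf : ∀ y, 0 ≤ y → HasDerivAt f (4 * y ^ 3 / ((6 + 4 * y) ^ 2 * (1 + y))) y := by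
    intro y hy
    have hy' : HasDerivAt (fun y : ℝ => y) 1 y := hasDerivAt_id y
    refine (((hy'.mul (hy'.const_add 6)).div ((hy'.const_mul 4).const_add 6)
      (by positivity)).sub ((hy'.const_add 1).log (by positivity))).congr_deriv ?_
    simp only [Pi.mul_apply]
    field_simp
    ring
  have hmono := monotoneOn_Ici_of_hasDerivAt_nonneg hf (fun y hy => by positivity) self_mem_Ici hx hx
  simp only [f, mul_zero, add_zero, log_one, sub_zero] at hmono
  linarith

noncomputable def Phi (q : ℝ) : ℝ :=
  √((1 + √(2 / q)) / (1 + √(2 * q))) * q * (1 + 1 / q) ^ (1 - q)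

noncomputable def twoLogPhiSq (t : ℝ) : ℝ :=
  3 * log t + log (t + √2) - log (√2 * t + 1) + (2 - 2 * t ^ 2) * (log (t ^ 2 + 1) - 2 * log t)

lemma two_mul_log_Phi_sq {t : ℝ} (ht : 0 < t) : 2 * log (Phi (t ^ 2)) = twoLogPhiSq t := by
  have h2q : √(2 * t ^ 2) = √2 * t := by rw [sqrt_mul zero_le_two, sqrt_sq ht.le]
  have h2dq : 1 + √(2 / t ^ 2) = (t + √2) / t := by
    rw [sqrt_div' _ (sq_nonneg t), sqrt_sq ht.le]; field_simp
  have hinv : 1 + 1 / t ^ 2 = (t ^ 2 + 1) / t ^ 2 := by field_simp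
  have hfrac : 0 < (t + √2) / t / (1 + √2 * t) := by positivity
  rw [Phi, h2q, h2dq, hinv, log_mul (by positivity) (by positivity),
    log_mul (by positivity) (by positivity), log_sqrt hfrac.le, log_rpow (by positivity),
    log_div (by positivity) (by positivity), log_div (by positivity) (by positivity),
    log_div (by positivity) (by positivity), log_pow, twoLogPhiSq]
  push_cast
  ring_nf

lemma hasDerivAt_twoLogPhiSq {t : ℝ} (ht : 0 < t) :
    HasDerivAt twoLogPhiSq (3 / t - 1 / (√2 * (t ^ 2 + 1) + 3 * t)
      + 4 * (t ^ 2 - 1) / (t * (t ^ 2 + 1)) - 4 * t * (log (t ^ 2 + 1) - 2 * log t)) t := by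
  have hid : HasDerivAt (fun x : ℝ => x) 1 t := hasDerivAt_id t
  have hsq : HasDerivAt (fun x : ℝ => x ^ 2) (2 * t) t := by simpa using hasDerivAt_pow 2 t
  have hlog := (hasDerivAt_log ht.ne').const_mul 3
  have hlog₁ := (hid.add_const √2).log (by positivity)
  have hlog₂ := ((hid.const_mul √2).add_const 1).log (by positivity)
  have hL := (hsq.add_const 1).log (by positivity) |>.sub ((hasDerivAt_log ht.ne').const_mul 2)
  refine (((hlog.add hlog₁).sub hlog₂).add ((hsq.const_mul 2).const_sub 2 |>.mul hL)).congr_deriv ?_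
  have h2 : √2 ^ 2 = 2 := sq_sqrt zero_le_two
  have h3 : √2 ^ 3 = 2 * √2 := by rw [pow_succ, h2]
  simp only [Pi.sub_apply]
  field_simp
  ring_nf
  simp only [h2, h3]
  ring

lemma deriv_twoLogPhiSq_nonneg {t : ℝ} (ht : 1 ≤ t) :
    0 ≤ 3 / t - 1 / (√2 * (t ^ 2 + 1) + 3 * t)
      + 4 * (t ^ 2 - 1) / (t * (t ^ 2 + 1)) - 4 * t * (log (t ^ 2 + 1) - 2 * log t) := by
  have ht0 : 0 < t := by linarith
  have hlog : log (t ^ 2 + 1) - 2 * log t ≤ (6 * t ^ 2 + 1) / (t ^ 2 * (6 * t ^ 2 + 4)) := by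
    have hL : log (t ^ 2 + 1) - 2 * log t = log (1 + 1 / t ^ 2) := by
      rw [show 2 * log t = log (t ^ 2) by simp, ← log_div (by positivity) (by positivity)]
      congr 1
      field_simp
    rw [hL]
    refine (log_one_add_le_pade (by positivity)).trans_eq ?_
    field_simp
  have hsqrt2 : 7 / 5 ≤ √2 := by rw [le_sqrt] <;> norm_num
  have hs : 0 ≤ t - 1 := by linarith
  have hpoly : 0 ≤ (9 * t ^ 4 - 3 * t ^ 2 - 4) * (√2 * (t ^ 2 + 1) + 3 * t)
      - t * (3 * t ^ 4 + 5 * t ^ 2 + 2) := by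
    have hquartic : 0 ≤ 9 * t ^ 4 - 3 * t ^ 2 - 4 := by nlinarith [pow_nonneg hs 4, pow_nonneg hs 3]
    nlinarith [mul_le_mul_of_nonneg_left hsqrt2 (mul_nonneg hquartic (by positivity : 0 ≤ t ^ 2 + 1)),
      pow_nonneg hs 6, pow_nonneg hs 5, pow_nonneg hs 4, pow_nonneg hs 3, pow_nonneg hs 2]
  have hrat : 3 / t - 1 / (√2 * (t ^ 2 + 1) + 3 * t) + 4 * (t ^ 2 - 1) / (t * (t ^ 2 + 1))
      - 4 * t * ((6 * t ^ 2 + 1) / (t ^ 2 * (6 * t ^ 2 + 4)))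
      = ((9 * t ^ 4 - 3 * t ^ 2 - 4) * (√2 * (t ^ 2 + 1) + 3 * t)
          - t * (3 * t ^ 4 + 5 * t ^ 2 + 2))
        / (t * (t ^ 2 + 1) * (3 * t ^ 2 + 2) * (√2 * (t ^ 2 + 1) + 3 * t)) := by
    field_simp
    ring
  calc (0 : ℝ) ≤ _ := div_nonneg hpoly (by positivity)
    _ = _ := hrat.symm
    _ ≤ _ := by gcongr

lemma twoLogPhiSq_nonneg {t : ℝ} (ht : 1 ≤ t) : 0 ≤ twoLogPhiSq t := by
  have hmono := monotoneOn_Ici_of_hasDerivAt_nonneg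
    (fun x hx => hasDerivAt_twoLogPhiSq (by linarith : (0 : ℝ) < x))
    (fun x hx => deriv_twoLogPhiSq_nonneg hx.le)
  have h1 : twoLogPhiSq 1 = 0 := by simp [twoLogPhiSq, add_comm]
  simpa [h1] using hmono self_mem_Ici ht ht

theorem Phi_ge_one (q : ℝ) (hq : 1 ≤ q) :
    1 ≤ Real.sqrt ((1 + Real.sqrt (2 / q)) / (1 + Real.sqrt (2 * q))) * q *
      (1 + 1 / q) ^ (1 - q) := by
  obtain ⟨t, ht, rfl⟩ : ∃ t, 1 ≤ t ∧ t ^ 2 = q := ⟨√q, one_le_sqrt.2 hq, sq_sqrt (by linarith)⟩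
  have hPhi : 0 < Phi (t ^ 2) := by unfold Phi; positivity
  change 1 ≤ Phi (t ^ 2)
  rw [← log_nonneg_iff hPhi]
  linarith [two_mul_log_Phi_sq (by linarith : 0 < t), twoLogPhiSq_nonneg ht]
end

section
/- For every real q ≥ 1, one has (1/(2√(2q))) · (1/(q + √(2q)) + 1/(1 + √(2q))) ≤ (2 − √2)/(1 + q). -/
theorem sqrt_term_bound (q : ℝ) (hq : 1 ≤ q) :
    1 / (2 * Real.sqrt (2 * q)) *
        (1 / (q + Real.sqrt (2 * q)) + 1 / (1 + Real.sqrt (2 * q))) ≤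
      (2 - Real.sqrt 2) / (1 + q) := by
  set s := Real.sqrt (2 * q) with hsdef
  set t := Real.sqrt 2 with htdef
  have hq0 : (0:ℝ) < q := by linarith
  have hs2 : s ^ 2 = 2 * q := Real.sq_sqrt (by linarith)
  have ht2 : t ^ 2 = 2 := Real.sq_sqrt (by norm_num)
  have ht0 : 1 < t := by nlinarith [Real.sqrt_nonneg 2]
  have ht15 : t ≤ 1.5 := by nlinarith [Real.sqrt_nonneg 2]
  have hts : t ≤ s := Real.sqrt_le_sqrt (by linarith)
  have hs0 : 1 < s := lt_of_lt_of_le ht0 hts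
  have h2 : (0:ℝ) < q + s := by linarith
  have h3 : (0:ℝ) < 1 + s := by linarith
  have h4 : (0:ℝ) < 1 + q := by linarith
  have hqs : q = s ^ 2 / 2 := by linarith
  rw [div_add_div _ _ (ne_of_gt h2) (ne_of_gt h3), div_mul_div_comm,
    div_le_div_iff₀ (by positivity) h4, hqs]
  have hQ : 0 ≤ (7 - 4*t)*s^3 + (12 - 5*t)*s^2 + (2 + 4*t)*s + 2*t := by
    nlinarith [pow_pos (lt_trans one_pos hs0) 3, pow_pos (lt_trans one_pos hs0) 2,
      lt_trans one_pos hs0]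
  have hst : 0 ≤ s - t := by linarith
  have key : 4 * ((2 - t) * (2 * s * ((s^2/2 + s) * (1 + s))) -
      (1 * (1 + s) + (s^2/2 + s) * 1) * (1 + s^2/2)) =
      (s - t) * ((7 - 4*t)*s^3 + (12 - 5*t)*s^2 + (2 + 4*t)*s + 2*t) := by
    linear_combination ((s - t) * (-4*s^2 - (5 + 4*t)*s + (-4*t^2 - 5*t + 4)) +
      (-4*t^3 - 5*t^2 + 4*t + 2)) * ht2
  nlinarith [key, mul_nonneg hst hQ]
end

section
/- Let q > 1 be real and let λ, α_1 ∈ ℂ and α_2 ∈ ℝ with α_2 ≥ 0, |α_1| < 1, and |α_2| ≤ 1. If λα_2 = 1, λ(1 + α_1α_2) = q(α_1 + α_2), and λα_1 = (q(q−1)/2)(α_1 + α_2)² + qα_1α_2, then α_1 is real and negative, α_1² = 1/((1 + √(2/q))(1 + √(2q))), and α_2² = (1 + √(2/q))/(1 + √(2q)). -/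
/-!
Eliminating `lam = 1 / α₂` leaves two real-coefficient equations in `α₁` and `α₂`. The first is
linear in `α₁` with a nonzero real coefficient, so `α₁` is real. A linear combination of the two
then shows that `p = α₁ α₂` satisfies `(1 + p)² = 2q p²`, i.e. `1 + p = ±√(2q) p`. The sign `+`
forces `0 < p < 1`, hence `q > 2`, and also `q < √(2q)`, hence `q < 2`; so `p (1 + √(2q)) = -1`,
and the stated values of `α₁²` and `α₂²` follow from the first equation.
-/

lemma Complex.eq_ofReal_div_of_mul_ofReal_eq {z : ℂ} {a b : ℝ} (ha : a ≠ 0)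
    (h : z * a = b) : z = ((b / a : ℝ) : ℂ) := by
  rw [Complex.ofReal_div, eq_div_iff (Complex.ofReal_ne_zero.mpr ha), h]

lemma Real.sqrt_two_div_eq_sqrt_two_mul_div {q : ℝ} (hq : 0 < q) : √(2 / q) = √(2 * q) / q := by
  rw [Real.sqrt_div' 2 hq.le, Real.sqrt_mul' 2 hq.le]
  field_simp
  rw [Real.sq_sqrt hq.le]

section ReducedSystem

variable {q x t : ℝ}

lemma sq_one_add_mul_eq_of_reduced_system (hq : q ≠ 1) (e2 : 1 + x * t = q * (x + t) * t)
    (e3 : x = q * (q - 1) / 2 * (x + t) ^ 2 * t + q * x * t ^ 2) :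
    (1 + x * t) ^ 2 = 2 * q * (x * t) ^ 2 := by
  have key : (q - 1) * ((1 + x * t) ^ 2 - 2 * q * (x * t) ^ 2) = 0 := by
    linear_combination (-(2 * q * t)) * e3
      + ((q - 1) * (1 + x * t + q * (x + t) * t) + 2 * q * x * t) * e2
  exact sub_eq_zero.mp ((mul_eq_zero.mp key).resolve_left (sub_ne_zero.mpr hq))

lemma not_one_add_mul_eq_sqrt_mul (hq : 1 < q) (ht0 : 0 < t) (ht1 : t ≤ 1) (hx : x < 1)
    (e2 : 1 + x * t = q * (x + t) * t) : 1 + x * t ≠ √(2 * q) * (x * t) := by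
  intro h
  set r := √(2 * q)
  have hr2 : r ^ 2 = 2 * q := Real.sq_sqrt (by positivity)
  have hr1 : 1 < r := by nlinarith [Real.sqrt_nonneg (2 * q)]
  have hp : x * t * (r - 1) = 1 := by linear_combination -h
  have hp0 : 0 < x * t := by nlinarith
  have hp1 : x * t < 1 := by nlinarith
  have hr2' : 2 < r := by nlinarith [mul_pos (sub_pos.2 hp1) (sub_pos.2 hr1)]
  have ht2 : q * t ^ 2 = x * t * (r - q) := by linear_combination -e2 + h
  have hrq : q < r := by
    by_contra! hrq
    nlinarith [mul_pos (by linarith : 0 < q) (pow_pos ht0 2), mul_nonneg hp0.le (sub_nonneg.2 hrq)]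
  -- `r > 2` gives `q = r² / 2 > 2`, while `r > q` gives `q = r² / 2 > q² / 2`
  nlinarith

lemma reduced_system_solution (hq : 1 < q) (ht0 : 0 < t) (ht1 : t ≤ 1) (hx : x < 1)
    (e2 : 1 + x * t = q * (x + t) * t)
    (e3 : x = q * (q - 1) / 2 * (x + t) ^ 2 * t + q * x * t ^ 2) :
    x < 0 ∧ x ^ 2 = 1 / ((1 + √(2 / q)) * (1 + √(2 * q))) ∧
      t ^ 2 = (1 + √(2 / q)) / (1 + √(2 * q)) := by
  have hq0 : 0 < q := by linarith
  rw [Real.sqrt_two_div_eq_sqrt_two_mul_div hq0]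
  set r := √(2 * q)
  have hr2 : r ^ 2 = 2 * q := Real.sq_sqrt (by positivity)
  have hr0 : 0 ≤ r := Real.sqrt_nonneg _
  have hsq : (1 + x * t) ^ 2 = (r * (x * t)) ^ 2 := by
    linear_combination sq_one_add_mul_eq_of_reduced_system hq.ne' e2 e3 - (x * t) ^ 2 * hr2
  obtain hplus | hminus := sq_eq_sq_iff_eq_or_eq_neg.mp hsq
  · exact absurd hplus (not_one_add_mul_eq_sqrt_mul hq ht0 ht1 hx e2)
  have hp : x * t * (1 + r) = -1 := by linear_combination hminus
  have ht2 : q * (1 + r) * t ^ 2 = q + r := by linear_combination -(1 + r) * e2 + (1 - q) * hp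
  refine ⟨?_, ?_, ?_⟩
  · have hp0 : x * t < 0 := by nlinarith
    nlinarith
  · field_simp
    linear_combination (q * (x * t * (1 + r) - 1)) * hp - x ^ 2 * (1 + r) * ht2
  · field_simp
    linear_combination ht2

end ReducedSystem

theorem l1_system_solution (q : ℝ) (hq : 1 < q) (lam α₁ : ℂ) (α₂ : ℝ)
    (hα₂0 : 0 ≤ α₂) (hα₁ : ‖α₁‖ < 1) (hα₂1 : α₂ ≤ 1)
    (h1 : lam * (α₂ : ℂ) = 1)
    (h2 : lam * (1 + α₁ * (α₂ : ℂ)) = (q : ℂ) * (α₁ + (α₂ : ℂ)))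
    (h3 : lam * α₁ = (((q * (q - 1) / 2 : ℝ)) : ℂ) * (α₁ + (α₂ : ℂ)) ^ 2 +
      (q : ℂ) * α₁ * (α₂ : ℂ)) :
    α₁.im = 0 ∧ α₁.re < 0 ∧
    α₁.re ^ 2 = 1 / ((1 + Real.sqrt (2 / q)) * (1 + Real.sqrt (2 * q))) ∧
    α₂ ^ 2 = (1 + Real.sqrt (2 / q)) / (1 + Real.sqrt (2 * q)) := by
  have hα₂ : α₂ ≠ 0 := by rintro rfl; simp at h1
  have e2 : 1 + α₁ * α₂ = q * (α₁ + α₂) * α₂ := by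
    linear_combination (α₂ : ℂ) * h2 - (1 + α₁ * α₂) * h1
  have e3 : α₁ = ((q * (q - 1) / 2 : ℝ) : ℂ) * (α₁ + α₂) ^ 2 * α₂ + q * α₁ * α₂ ^ 2 := by
    linear_combination (α₂ : ℂ) * h3 - α₁ * h1
  obtain ⟨x, rfl⟩ : ∃ x : ℝ, α₁ = x :=
    ⟨_, Complex.eq_ofReal_div_of_mul_ofReal_eq (a := (1 - q) * α₂) (b := q * α₂ ^ 2 - 1)
      (mul_ne_zero (by linarith) hα₂) (by push_cast; linear_combination e2)⟩
  rw [Complex.norm_real, Real.norm_eq_abs] at hα₁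
  simp only [Complex.ofReal_re, Complex.ofReal_im, true_and]
  exact reduced_system_solution hq (hα₂0.lt_of_ne' hα₂) hα₂1 (abs_lt.mp hα₁).2
    (by exact_mod_cast e2) (by exact_mod_cast e3)
end

section
/- Let ρ > 0 be real and let λ, η, ξ ∈ ℂ. If λρ = 1, λ(ηρ + 1) = 2(η + ρ), λ(ξρ + η) = (η + ρ)² + 2(ξ + ηρ), and λξ = 2((η + ρ)(ξ + ηρ) + ξρ), then ρ = √3/2, η = −√3/3, ξ = 1/4, and λ = 2/√3. -/
theorem l2_system_solution (ρ : ℝ) (hρ : 0 < ρ) (lam η ξ : ℂ)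
    (h1 : lam * (ρ : ℂ) = 1)
    (h2 : lam * (η * (ρ : ℂ) + 1) = 2 * (η + (ρ : ℂ)))
    (h3 : lam * (ξ * (ρ : ℂ) + η) = (η + (ρ : ℂ)) ^ 2 + 2 * (ξ + η * (ρ : ℂ)))
    (h4 : lam * ξ = 2 * ((η + (ρ : ℂ)) * (ξ + η * (ρ : ℂ)) + ξ * (ρ : ℂ))) :
    ρ = Real.sqrt 3 / 2 ∧ η = -((Real.sqrt 3 : ℂ) / 3) ∧ ξ = 1 / 4 ∧
      lam = 2 / (Real.sqrt 3 : ℂ) := by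
  set r : ℂ := (ρ : ℂ) with hrdef
  have hr : r ≠ 0 := by
    simp only [hrdef, Ne, Complex.ofReal_eq_zero]
    exact hρ.ne'
  have hη : η * r = 1 - 2 * r ^ 2 := by
    linear_combination (η * r + 1) * h1 - r * h2
  have hξ : ξ * r ^ 2 = 3 * r ^ 4 - 2 * r ^ 2 := by
    linear_combination (-r ^ 2) * h3 + r * (ξ * r + η) * h1 +
      (-(η * r + 2 * r ^ 2)) * hη
  have hq : 4 * r ^ 6 = 3 * r ^ 4 := by
    linear_combination (-r ^ 3) * h4 + (ξ * r ^ 2) * h1 -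
      (2 * (ξ * r ^ 2) + 2 * r ^ 2 * (η * r) + 2 * r ^ 2 * (1 - 2 * r ^ 2) + 2 * r ^ 4) * hη -
      hξ
  have hr2 : r ^ 2 = 3 / 4 := by
    have h0 : (4 * r ^ 2 - 3) * r ^ 4 = 0 := by linear_combination hq
    rcases mul_eq_zero.1 h0 with h | h
    · linear_combination (1 / 4) * h
    · exact absurd (pow_eq_zero_iff (by norm_num)|>.1 h) hr
  have hρ2 : ρ ^ 2 = 3 / 4 := by
    have : ((ρ ^ 2 : ℝ) : ℂ) = ((3 / 4 : ℝ) : ℂ) := by push_cast; exact hr2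
    exact_mod_cast this
  have hρval : ρ = Real.sqrt 3 / 2 := by
    have h3' : (3 : ℝ) = (ρ * 2) ^ 2 := by nlinarith
    rw [h3', Real.sqrt_sq (by positivity)]
    ring
  have hs3 : ((Real.sqrt 3 : ℝ) : ℂ) ^ 2 = 3 := by
    rw [← Complex.ofReal_pow, Real.sq_sqrt (by norm_num : (0:ℝ) ≤ 3)]
    norm_num
  have hs3ne : ((Real.sqrt 3 : ℝ) : ℂ) ≠ 0 := by
    simp only [Ne, Complex.ofReal_eq_zero]
    positivity
  have hrval : r = ((Real.sqrt 3 : ℝ) : ℂ) / 2 := by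
    rw [hrdef, hρval]; push_cast; ring
  refine ⟨hρval, ?_, ?_, ?_⟩
  · -- η
    rw [hrval] at hη
    have hη3 : η * ((Real.sqrt 3 : ℝ) : ℂ) = -1 := by
      linear_combination 2 * hη - hs3
    linear_combination (((Real.sqrt 3 : ℝ) : ℂ) / 3) * hη3 - (η / 3) * hs3
  · -- ξ
    have : ξ * (3 / 4 : ℂ) = 3 * (3 / 4) ^ 2 - 2 * (3 / 4) := by
      rw [← hr2]; linear_combination hξ + (3 * r ^ 2 - 2) * hr2 - (3 * r ^ 2 - 2) * hr2
    linear_combination (4 / 3 : ℂ) * this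
  · -- lam
    rw [hrval] at h1
    field_simp at h1 ⊢
    linear_combination h1
end
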